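/- Let K be a field of characteristic not 2 and λ ∈ K \ {0, ±1}. Let Q be a point of the curve E: y² = (x+λ²)(x+1)x with x(Q) = λ. Then Q is divisible by 2 in E(K) if and only if there exists c ∈ K \ {0, ±1, ±1±√2, ±√−1} such that λ = ((c − 1/c)/2)². -/

import Mathlib

/-- The elliptic curve `y² = (x − α₁)(x − α₂)(x − α₃)` as an affine Weierstrass curve. -/
def cubicCurve {K : Type*} [Field K] (α₁ α₂ α₃ : K) : WeierstrassCurve.Affine K :=
  { a₁ := 0, a₂ := -(α₁ + α₂ + α₃), a₃ := 0,
    a₄ := α₁ * α₂ + α₂ * α₃ + α₃ * α₁, a₆ := -(α₁ * α₂ * α₃) }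

/-- `c` avoids the exceptional set `{0, ±1, ±1±√2, ±√−1}`: equivalently `c ≠ 0`, `c ≠ ±1`,
`((c−1/c)/2)² ≠ 1` and `((c−1/c)/2)² ≠ −1`. -/
def GoodParam {K : Type*} [Field K] (c : K) : Prop :=
  c ≠ 0 ∧ c ≠ 1 ∧ c ≠ -1 ∧ ((c - 1 / c) / 2) ^ 2 ≠ 1 ∧ ((c - 1 / c) / 2) ^ 2 ≠ -1


/-!
A point `(x₀, y₀)` of `y² = (x - α₁)(x - α₂)(x - α₃)` with distinct `αᵢ` is twice a rational
point iff every `x₀ - αᵢ` is a square. The doubling formula writes `x(2R) - αᵢ` as an explicit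
square; conversely, if `x₀ - αᵢ = rᵢ²` with the signs chosen so that `y₀ = r₁r₂r₃`, then
`R = (x₀ + r₁r₂ + r₂r₃ + r₃r₁, (r₁ + r₂)(r₂ + r₃)(r₃ + r₁))` satisfies `2R = (x₀, y₀)`.
For `x₀ = λ` and roots `-λ², -1, 0` the condition reads `λ = t²`, `λ + 1 = s²`, and then
`c = s + t` has `1/c = s - t`, so `t = (c - 1/c)/2`.
-/

open WeierstrassCurve.Affine

section CubicCurve

variable {K : Type*} [Field K] {α₁ α₂ α₃ x y : K}

lemma cubicCurve_equation_iff :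
    (cubicCurve α₁ α₂ α₃).Equation x y ↔ y ^ 2 = (x - α₁) * (x - α₂) * (x - α₃) := by
  rw [equation_iff]
  simp only [cubicCurve]
  constructor <;> intro h <;> linear_combination h

lemma cubicCurve_negY : (cubicCurve α₁ α₂ α₃).negY x y = -y := by
  simp [negY, cubicCurve]

lemma cubicCurve_rotate : cubicCurve α₁ α₂ α₃ = cubicCurve α₂ α₃ α₁ := by
  simp only [cubicCurve, WeierstrassCurve.mk.injEq, true_and]
  exact ⟨by ring, by ring, by ring⟩

lemma cubicCurve_nonsingular_of_ne_neg (h : (cubicCurve α₁ α₂ α₃).Equation x y) (hy : y ≠ -y) :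
    (cubicCurve α₁ α₂ α₃).Nonsingular x y :=
  (nonsingular_iff x y).2 ⟨h, Or.inr <| by simpa [cubicCurve] using hy⟩

variable [DecidableEq K]

lemma cubicCurve_slope_self (hy : y ≠ -y) :
    (cubicCurve α₁ α₂ α₃).slope x x y y =
      ((x - α₁) * (x - α₂) + (x - α₂) * (x - α₃) + (x - α₃) * (x - α₁)) / (2 * y) := by
  rw [slope_of_Y_ne rfl (by rwa [cubicCurve_negY]), cubicCurve_negY]
  simp only [cubicCurve]
  congr 1 <;> ring

lemma cubicCurve_addX_self_sub (h : (cubicCurve α₁ α₂ α₃).Equation x y) (hy : y ≠ -y) :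
    (cubicCurve α₁ α₂ α₃).addX x x ((cubicCurve α₁ α₂ α₃).slope x x y y) - α₁ =
      (((x - α₁) ^ 2 - (α₁ - α₂) * (α₁ - α₃)) / (2 * y)) ^ 2 := by
  have hy0 : y ≠ 0 := fun h0 => hy (by rw [h0, neg_zero])
  have h2 : (2 : K) ≠ 0 := fun h0 => hy (by linear_combination y * h0)
  rw [cubicCurve_equation_iff] at h
  rw [addX, cubicCurve_slope_self hy]
  simp only [cubicCurve]
  field_simp
  linear_combination (4 * (α₂ + α₃ - 2 * x)) * h

lemma isSquare_cubicCurve_addX_self_sub (h : (cubicCurve α₁ α₂ α₃).Equation x y) (hy : y ≠ -y) :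
    IsSquare ((cubicCurve α₁ α₂ α₃).addX x x ((cubicCurve α₁ α₂ α₃).slope x x y y) - α₁) :=
  ⟨_, (cubicCurve_addX_self_sub h hy).trans (sq _)⟩

variable {x₀ y₀ : K} {h₀ : (cubicCurve α₁ α₂ α₃).Nonsingular x₀ y₀}

lemma exists_addX_self_eq_of_two_nsmul_eq_some {R : (cubicCurve α₁ α₂ α₃).Point}
    (hR : 2 • R = Point.some _ _ h₀) :
    ∃ x y, (cubicCurve α₁ α₂ α₃).Equation x y ∧ y ≠ -y ∧
      (cubicCurve α₁ α₂ α₃).addX x x ((cubicCurve α₁ α₂ α₃).slope x x y y) = x₀ := by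
  rw [two_nsmul] at hR
  rcases R with _ | ⟨x, y, h⟩
  · exact absurd hR.symm (Point.some_ne_zero h₀)
  · by_cases hy : y = -y
    · rw [Point.add_self_of_Y_eq (by rwa [cubicCurve_negY])] at hR
      exact absurd hR.symm (Point.some_ne_zero h₀)
    · rw [Point.add_self_of_Y_ne (by rwa [cubicCurve_negY]), Point.some.injEq] at hR
      exact ⟨_, _, h.1, hy, hR.1⟩

theorem isSquare_sub_of_two_nsmul_eq_some {R : (cubicCurve α₁ α₂ α₃).Point}
    (hR : 2 • R = Point.some _ _ h₀) :
    IsSquare (x₀ - α₁) ∧ IsSquare (x₀ - α₂) ∧ IsSquare (x₀ - α₃) := by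
  obtain ⟨x, y, h, hy, rfl⟩ := exists_addX_self_eq_of_two_nsmul_eq_some hR
  refine ⟨isSquare_cubicCurve_addX_self_sub h hy, ?_, ?_⟩
  · rw [cubicCurve_rotate] at h ⊢
    exact isSquare_cubicCurve_addX_self_sub h hy
  · rw [cubicCurve_rotate, cubicCurve_rotate] at h ⊢
    exact isSquare_cubicCurve_addX_self_sub h hy

theorem exists_two_nsmul_eq_some_of_sub_eq_mul_self (h₁₂ : α₁ ≠ α₂) (h₂₃ : α₂ ≠ α₃)
    (h₃₁ : α₃ ≠ α₁) (h2 : (2 : K) ≠ 0) {r₁ r₂ r₃ : K} (hr₁ : x₀ - α₁ = r₁ * r₁)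
    (hr₂ : x₀ - α₂ = r₂ * r₂) (hr₃ : x₀ - α₃ = r₃ * r₃) (hy₀ : y₀ = r₁ * r₂ * r₃) :
    ∃ R : (cubicCurve α₁ α₂ α₃).Point, 2 • R = Point.some _ _ h₀ := by
  have hsum {α β r s : K} (hαβ : α ≠ β) (hr : x₀ - α = r * r) (hs : x₀ - β = s * s) :
      r + s ≠ 0 :=
    fun h => hαβ (by linear_combination hs - hr + (s - r) * h)
  have hyR0 : (r₁ + r₂) * (r₂ + r₃) * (r₃ + r₁) ≠ 0 :=
    mul_ne_zero (mul_ne_zero (hsum h₁₂ hr₁ hr₂) (hsum h₂₃ hr₂ hr₃)) (hsum h₃₁ hr₃ hr₁)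
  have hα₁ : α₁ = x₀ - r₁ * r₁ := by linear_combination -hr₁
  have hα₂ : α₂ = x₀ - r₂ * r₂ := by linear_combination -hr₂
  have hα₃ : α₃ = x₀ - r₃ * r₃ := by linear_combination -hr₃
  -- `xR - αᵢ = (rᵢ + rⱼ) * (rᵢ + rₖ)`, so `yR ^ 2` is the product of the three.
  set xR := x₀ + r₁ * r₂ + r₂ * r₃ + r₃ * r₁ with hxR
  set yR := (r₁ + r₂) * (r₂ + r₃) * (r₃ + r₁) with hyR
  have hyR_ne : yR ≠ -yR :=
    fun h => hyR0 ((mul_eq_zero.1 (by linear_combination h : (2 : K) * yR = 0)).resolve_left h2)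
  have hR : (cubicCurve α₁ α₂ α₃).Equation xR yR := by
    rw [cubicCurve_equation_iff]
    subst hα₁ hα₂ hα₃
    ring
  refine ⟨Point.some _ _ (cubicCurve_nonsingular_of_ne_neg hR hyR_ne), ?_⟩
  rw [two_nsmul, Point.add_self_of_Y_ne (by rwa [cubicCurve_negY]), Point.some.injEq]
  have hx : (cubicCurve α₁ α₂ α₃).addX xR xR ((cubicCurve α₁ α₂ α₃).slope xR xR yR yR) = x₀ := by
    rw [addX, cubicCurve_slope_self hyR_ne]
    simp only [cubicCurve]
    subst hα₁ hα₂ hα₃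
    field_simp
    ring
  refine ⟨hx, ?_⟩
  rw [addY, hx, cubicCurve_negY, negAddY, hx, cubicCurve_slope_self hyR_ne, hy₀]
  subst hα₁ hα₂ hα₃
  field_simp
  rw [hxR, hyR]
  ring

theorem exists_two_nsmul_eq_some_iff_isSquare (h₁₂ : α₁ ≠ α₂) (h₂₃ : α₂ ≠ α₃) (h₃₁ : α₃ ≠ α₁)
    (h2 : (2 : K) ≠ 0) :
    (∃ R : (cubicCurve α₁ α₂ α₃).Point, 2 • R = Point.some _ _ h₀) ↔
      IsSquare (x₀ - α₁) ∧ IsSquare (x₀ - α₂) ∧ IsSquare (x₀ - α₃) := by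
  refine ⟨fun ⟨_, hR⟩ => isSquare_sub_of_two_nsmul_eq_some hR, ?_⟩
  rintro ⟨⟨r₁, hr₁⟩, ⟨r₂, hr₂⟩, ⟨r₃, hr₃⟩⟩
  have hy₀ : (y₀ - r₁ * r₂ * r₃) * (y₀ + r₁ * r₂ * r₃) = 0 := by
    have h := cubicCurve_equation_iff.1 h₀.1
    rw [hr₁, hr₂, hr₃] at h
    linear_combination h
  rcases mul_eq_zero.1 hy₀ with h | h
  · exact exists_two_nsmul_eq_some_of_sub_eq_mul_self h₁₂ h₂₃ h₃₁ h2 hr₁ hr₂ hr₃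
      (by linear_combination h)
  · exact exists_two_nsmul_eq_some_of_sub_eq_mul_self h₁₂ h₂₃ h₃₁ h2 (r₁ := -r₁)
      (by rw [hr₁, neg_mul_neg]) hr₂ hr₃ (by linear_combination h)

end CubicCurve

theorem isSquare_and_isSquare_add_one_iff_exists_goodParam {K : Type*} [Field K] (h2 : (2 : K) ≠ 0) {lam : K}
    (h0 : lam ≠ 0) (h1 : lam ≠ 1) (hm1 : lam ≠ -1) :
    IsSquare lam ∧ IsSquare (lam + 1) ↔ ∃ c : K, GoodParam c ∧ lam = ((c - 1 / c) / 2) ^ 2 := by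
  constructor
  · rintro ⟨⟨t, rfl⟩, ⟨s, hs⟩⟩
    have hst : (s + t) * (s - t) = 1 := by linear_combination -hs
    have hc : s + t ≠ 0 := left_ne_zero_of_mul_eq_one hst
    have ht : ((s + t) - 1 / (s + t)) / 2 = t := by
      rw [one_div, inv_eq_of_mul_eq_one_right hst]
      field_simp
      ring
    have ht0 : t ≠ 0 := by
      rintro rfl
      exact h0 (mul_zero 0)
    refine ⟨s + t, ⟨hc, fun h => ht0 ?_, fun h => ht0 ?_, ?_, ?_⟩, ?_⟩
    · rw [← ht, h]
      norm_num
    · rw [← ht, h]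
      norm_num
    · rwa [ht, sq]
    · rwa [ht, sq]
    · rw [ht, sq]
  · rintro ⟨c, hc, rfl⟩
    refine ⟨⟨_, sq _⟩, ⟨(c + 1 / c) / 2, ?_⟩⟩
    have hc0 := hc.1
    field_simp
    ring

open Classical in
theorem div_two_of_x_eq_lambda_iff {K : Type*} [Field K] (h2 : (2 : K) ≠ 0)
    (lam : K) (h0 : lam ≠ 0) (h1 : lam ≠ 1) (hm1 : lam ≠ -1)
    (yQ : K) (hQ : (cubicCurve (-(lam ^ 2)) (-1) 0).Nonsingular lam yQ) :
    (∃ R : (cubicCurve (-(lam ^ 2)) (-1) 0).Point,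
        2 • R = WeierstrassCurve.Affine.Point.some _ _ hQ) ↔
      ∃ c : K, GoodParam c ∧ lam = ((c - 1 / c) / 2) ^ 2 := by
  have hsq : -(lam ^ 2) ≠ -1 := by
    rw [ne_eq, neg_inj, sq, mul_self_eq_one_iff, not_or]
    exact ⟨h1, hm1⟩
  rw [exists_two_nsmul_eq_some_iff_isSquare hsq (by norm_num) (neg_ne_zero.2 (pow_ne_zero 2 h0)).symm
    h2, ← isSquare_and_isSquare_add_one_iff_exists_goodParam h2 h0 h1 hm1, sub_zero, sub_neg_eq_add, sub_neg_eq_add]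
  refine ⟨fun ⟨_, h, h'⟩ => ⟨h', h⟩, fun ⟨h, h'⟩ => ⟨?_, h', h⟩⟩
  rw [show lam + lam ^ 2 = lam * (lam + 1) by ring]
  exact h.mul h'
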